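/- Let A_G be an n×n real symmetric matrix, A_H an m×m real symmetric matrix, and let N = [[A_G, J_{n×m}],[J_{m×n}, A_H]] (the adjacency matrix of the join when A_G, A_H are adjacency matrices). Let u, v ∈ ℝ^n be linearly independent unit vectors with 𝟙ᵀ A_G^k u = 0 for all 0 ≤ k ≤ n−1. If exp(iτ A_G) u = α u + β v for some α, β ∈ ℂ with β ≠ 0, then exp(iτ N) [uᵀ 0]ᵀ = α [uᵀ 0]ᵀ + β [vᵀ 0]ᵀ; in particular the join exhibits fractional revival from [uᵀ 0]ᵀ to [vᵀ 0]ᵀ at time τ. -/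

import Mathlib

open Matrix Filter

/-- Transition matrix `U(t) = exp(itM)` of a real symmetric matrix `M`, acting on `ℂ^ι`. -/
noncomputable def transU {ι : Type*} [Fintype ι] [DecidableEq ι]
    (M : Matrix ι ι ℝ) (t : ℝ) : Matrix ι ι ℂ :=
  NormedSpace.exp ((Complex.I * (t : ℂ)) • M.map Complex.ofReal)

/-- Transition matrix `exp(itM)` of a complex matrix `M`. -/
noncomputable def transUC {ι : Type*} [Fintype ι] [DecidableEq ι]
    (M : Matrix ι ι ℂ) (t : ℝ) : Matrix ι ι ℂ :=
  NormedSpace.exp ((Complex.I * (t : ℂ)) • M)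

/-- Real standard basis vector `e_a`. -/
def eVecR {ι : Type*} [DecidableEq ι] (a : ι) : ι → ℝ := fun j => if j = a then 1 else 0

/-- Complex standard basis vector `e_a`. -/
def eVec {ι : Type*} [DecidableEq ι] (a : ι) : ι → ℂ := fun j => if j = a then 1 else 0

/-- Coercion of a real vector to a complex vector. -/
def cVec {ι : Type*} (u : ι → ℝ) : ι → ℂ := fun j => (u j : ℂ)

/-- The plus state `(e_a + e_b)/√2`. -/
noncomputable def plusState {ι : Type*} [DecidableEq ι] (a b : ι) : ι → ℂ :=
  ((Real.sqrt 2 : ℂ))⁻¹ • (eVec a + eVec b)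

/-- The pair state `(e_a − e_b)/√2`. -/
noncomputable def pairState {ι : Type*} [DecidableEq ι] (a b : ι) : ι → ℂ :=
  ((Real.sqrt 2 : ℂ))⁻¹ • (eVec a - eVec b)

/-- Pretty good state transfer from `u` to `v` relative to `M`:
there are a sequence of times `t k` and a unimodular `γ` with `U(t k) u → γ v`. -/
def PGST {ι : Type*} [Fintype ι] [DecidableEq ι]
    (M : Matrix ι ι ℝ) (u v : ι → ℂ) : Prop :=
  ∃ (t : ℕ → ℝ) (γ : ℂ), ‖γ‖ = 1 ∧
    Tendsto (fun k => (transU M (t k)).mulVec u) atTop (nhds (γ • v))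

/-- The permutation matrix of `σ`, satisfying `permMat σ *ᵥ e_a = e_{σ a}`. -/
def permMat {ι : Type*} [DecidableEq ι] (σ : Equiv.Perm ι) : Matrix ι ι ℝ :=
  Matrix.of fun i j => if σ j = i then 1 else 0

/-- Adjacency matrix of the circulant graph `Cay(ℤ/n, S)`. -/
noncomputable def cayA (n : ℕ) (S : Finset (ZMod n)) : Matrix (ZMod n) (ZMod n) ℝ :=
  Matrix.of fun a b => if a - b ∈ S then 1 else 0

/-- Adjacency matrix of the cycle `C_n` on `ℤ/n`. -/
noncomputable def cycA (n : ℕ) : Matrix (ZMod n) (ZMod n) ℝ :=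
  Matrix.of fun a b => if a - b = 1 ∨ b - a = 1 then 1 else 0

/-- Adjacency matrix `J − I − A(C_n)` of the complement of the cycle `C_n`. -/
noncomputable def cycAbar (n : ℕ) : Matrix (ZMod n) (ZMod n) ℝ :=
  Matrix.of (fun _ _ => (1 : ℝ)) - 1 - cycA n

/-! By Cayley–Hamilton, `𝟙ᵀ A_Gᵏ u = 0` for `k < n` forces it for every `k`, so the all-ones
blocks of `N` annihilate the whole Krylov orbit of `u` and `Nᵏ [u; 0] = [A_Gᵏ u; 0]`.
Summing the exponential series termwise, `exp(iτN) [u; 0] = [exp(iτA_G) u; 0]`, and the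
fractional revival of `A_G` carries over unchanged. -/

namespace Matrix

theorem dotProduct_pow_mulVec_eq_zero_of_forall_lt_card {ι R : Type*} [Fintype ι]
    [DecidableEq ι] [CommRing R] [Nontrivial R] (A : Matrix ι ι R) (w x : ι → R)
    (h : ∀ k < Fintype.card ι, w ⬝ᵥ (A ^ k *ᵥ x) = 0) (k : ℕ) :
    w ⬝ᵥ (A ^ k *ᵥ x) = 0 := by
  rw [pow_eq_aeval_mod_charpoly]
  set p := Polynomial.X ^ k %ₘ A.charpoly
  by_cases hp : p = 0
  · simp [hp]
  have hdeg : p.natDegree < Fintype.card ι := by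
    rw [Polynomial.natDegree_lt_iff_degree_lt hp, ← A.charpoly_degree_eq_dim]
    exact Polynomial.degree_modByMonic_lt _ A.charpoly_monic
  rw [Polynomial.aeval_eq_sum_range' hdeg, sum_mulVec, dotProduct_sum]
  refine Finset.sum_eq_zero fun i hi => ?_
  rw [smul_mulVec, dotProduct_smul, h i (Finset.mem_range.mp hi), smul_zero]

theorem fromBlocks_pow_mulVec_sumElim_zero {ι κ R : Type*} [Fintype ι] [Fintype κ]
    [DecidableEq ι] [DecidableEq κ] [Semiring R] (A : Matrix ι ι R) (B : Matrix ι κ R)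
    (C : Matrix κ ι R) (D : Matrix κ κ R) (x : ι → R)
    (hC : ∀ k, C *ᵥ (A ^ k *ᵥ x) = 0) (k : ℕ) :
    fromBlocks A B C D ^ k *ᵥ Sum.elim x 0 = Sum.elim (A ^ k *ᵥ x) 0 := by
  induction k with
  | zero => simp
  | succ k ih =>
    rw [pow_succ', ← mulVec_mulVec, ih, fromBlocks_mulVec]
    simp [hC k, mulVec_mulVec, ← pow_succ']

theorem map_ofReal_pow_mulVec_cVec {ι : Type*} [Fintype ι] [DecidableEq ι] (A : Matrix ι ι ℝ)
    (x : ι → ℝ) (k : ℕ) : A.map Complex.ofReal ^ k *ᵥ cVec x = cVec (A ^ k *ᵥ x) := by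
  ext i
  rw [show A.map Complex.ofReal ^ k = (A ^ k).map Complex.ofReal from
    (map_pow Complex.ofRealHom.mapMatrix A k).symm]
  exact (RingHom.map_mulVec Complex.ofRealHom (A ^ k) x i).symm

section linftyOp

attribute [local instance] Matrix.linftyOpNormedRing Matrix.linftyOpNormedAlgebra

theorem hasSum_exp_mulVec {ι 𝕂 : Type*} [RCLike 𝕂] [Fintype ι] [DecidableEq ι]
    (M : Matrix ι ι 𝕂) (w : ι → 𝕂) :
    HasSum (fun k => (k.factorial⁻¹ : 𝕂) • (M ^ k *ᵥ w)) (NormedSpace.exp M *ᵥ w) := by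
  have := (NormedSpace.exp_series_hasSum_exp' (𝕂 := 𝕂) M).map (mulVec.addMonoidHomLeft w)
    (continuous_id.matrix_mulVec continuous_const)
  simp only [Function.comp_def, mulVec.addMonoidHomLeft, AddMonoidHom.coe_mk, ZeroHom.coe_mk,
    smul_mulVec] at this
  exact this

end linftyOp

theorem exp_smul_mulVec_eq_of_pow_mulVec {ι κ 𝕂 : Type*} [RCLike 𝕂] [Fintype ι]
    [DecidableEq ι] [Fintype κ] [DecidableEq κ] (M : Matrix κ κ 𝕂) (A : Matrix ι ι 𝕂)
    (L : (ι → 𝕂) →ₗ[𝕂] (κ → 𝕂)) (x : ι → 𝕂) (h : ∀ k, M ^ k *ᵥ L x = L (A ^ k *ᵥ x))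
    (c : 𝕂) : NormedSpace.exp (c • M) *ᵥ L x = L (NormedSpace.exp (c • A) *ᵥ x) := by
  refine (hasSum_exp_mulVec (c • M) (L x)).unique ?_
  have := (hasSum_exp_mulVec (c • A) x).map L L.continuous_of_finiteDimensional
  simpa [Function.comp_def, _root_.smul_pow, smul_mulVec, h] using this

end Matrix

theorem join_adjacency_FR_general {n m : ℕ}
    (AG : Matrix (Fin n) (Fin n) ℝ)
    (AH : Matrix (Fin m) (Fin m) ℝ)
    (u v : Fin n → ℝ)
    (horth : ∀ k : ℕ, k ≤ n - 1 → (fun _ => (1 : ℝ)) ⬝ᵥ ((AG ^ k) *ᵥ u) = 0)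
    (τ : ℝ) (α β : ℂ)
    (hfr : (transU AG τ) *ᵥ cVec u = α • cVec u + β • cVec v) :
    (transU (Matrix.fromBlocks AG (Matrix.of fun _ _ => (1 : ℝ))
          (Matrix.of fun _ _ => (1 : ℝ)) AH) τ) *ᵥ Sum.elim (cVec u) (0 : Fin m → ℂ)
      = α • Sum.elim (cVec u) (0 : Fin m → ℂ) + β • Sum.elim (cVec v) (0 : Fin m → ℂ) := by
  set N := Matrix.fromBlocks AG (Matrix.of fun _ _ => (1 : ℝ)) (Matrix.of fun _ _ => 1) AH
  have horth_all := dotProduct_pow_mulVec_eq_zero_of_forall_lt_card AG _ u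
    (fun k hk => horth k (by rw [Fintype.card_fin] at hk; omega))
  have hN : ∀ k, N ^ k *ᵥ Sum.elim u 0 = Sum.elim (AG ^ k *ᵥ u) 0 :=
    fromBlocks_pow_mulVec_sumElim_zero _ _ _ _ u fun k =>
      funext fun _ => by simpa [mulVec, dotProduct] using horth_all k
  have hcVec : ∀ x : Fin n → ℝ, Sum.elim (cVec x) (0 : Fin m → ℂ) = cVec (Sum.elim x 0) := by
    intro x; ext (i | i) <;> simp [cVec]
  have hNc : ∀ k, N.map Complex.ofReal ^ k *ᵥ Sum.elim (cVec u) 0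
      = Sum.elim (AG.map Complex.ofReal ^ k *ᵥ cVec u) (0 : Fin m → ℂ) := by
    intro k
    rw [hcVec, map_ofReal_pow_mulVec_cVec, map_ofReal_pow_mulVec_cVec, hN, hcVec]
  calc transU N τ *ᵥ Sum.elim (cVec u) 0
      = Sum.elim (transU AG τ *ᵥ cVec u) 0 :=
        exp_smul_mulVec_eq_of_pow_mulVec _ _ Sum.elimZeroRight _ hNc _
    _ = _ := by
      rw [hfr]
      ext (i | i) <;> simp

/-- fractional revival passes to the join when `𝟙ᵀ A_Gᵏ u = 0` for all
`0 ≤ k ≤ n−1`. -/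
theorem join_adjacency_FR {n m : ℕ}
    (AG : Matrix (Fin n) (Fin n) ℝ) (hAG : AG.IsSymm)
    (AH : Matrix (Fin m) (Fin m) ℝ) (hAH : AH.IsSymm)
    (u v : Fin n → ℝ) (hu : u ⬝ᵥ u = 1) (hv : v ⬝ᵥ v = 1)
    (hli : LinearIndependent ℝ ![u, v])
    (horth : ∀ k : ℕ, k ≤ n - 1 → (fun _ => (1 : ℝ)) ⬝ᵥ ((AG ^ k) *ᵥ u) = 0)
    (τ : ℝ) (α β : ℂ) (hβ : β ≠ 0)
    (hfr : (transU AG τ) *ᵥ cVec u = α • cVec u + β • cVec v) :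
    (transU (Matrix.fromBlocks AG (Matrix.of fun _ _ => (1 : ℝ))
          (Matrix.of fun _ _ => (1 : ℝ)) AH) τ) *ᵥ Sum.elim (cVec u) (0 : Fin m → ℂ)
      = α • Sum.elim (cVec u) (0 : Fin m → ℂ) + β • Sum.elim (cVec v) (0 : Fin m → ℂ) :=
  join_adjacency_FR_general AG AH u v horth τ α β hfr
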